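/- Triangle inequality under composition on a normal domain: if X is a normal space and f_1,...,f_r : X → Y, g_1,...,g_r : Y → Z are fibrewise maps over B, then D_B(g_1∘f_1,...,g_r∘f_r) ≤ D_B(f_1,...,f_r) + D_B(g_1,...,g_r). -/

import Mathlib

open Set

/-- Two continuous maps are fibrewise homotopic over `B`: there is a homotopy
whose every time-slice commutes with the projections to `B`. -/
def FibHomotopic {B X Y : Type*} [TopologicalSpace B] [TopologicalSpace X] [TopologicalSpace Y]
    (pX : X → B) (pY : Y → B) (f g : C(X, Y)) : Prop :=
  ∃ H : f.Homotopy g, ∀ (x : X) (t : unitInterval), pY (H (t, x)) = pX x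

/-- Sequential parametrized homotopic distance of a family of fibrewise maps:
the least `n` such that `X` admits an open cover by `n + 1` open sets on each of
which all the maps are pairwise fibrewise homotopic (`∞` if none exists). -/
noncomputable def fibDist {B X Y ι : Type*} [TopologicalSpace B] [TopologicalSpace X]
    [TopologicalSpace Y] (pX : X → B) (pY : Y → B) (f : ι → C(X, Y)) : ℕ∞ :=
  sInf {n : ℕ∞ | ∃ k : ℕ, (k : ℕ∞) = n ∧ ∃ U : Fin (k + 1) → Set X,
    (∀ i, IsOpen (U i)) ∧ (⋃ i, U i) = Set.univ ∧
    ∀ i s t, FibHomotopic (fun x : U i => pX (x : X)) pY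
      ((f s).restrict (U i)) ((f t).restrict (U i))}

/-!
Take covers `U₀, …, Uₘ` of `X` for the `fᵢ` and `V₀, …, Vₙ` of `Y` for the `gᵢ`, and fix an
index `a`. On `Uᵢ ∩ f_a⁻¹(Vⱼ)` we have `g_s f_s ≃ g_s f_a ≃ g_t f_a ≃ g_t f_t` fibrewise.
Normality gives partitions of unity subordinate to `U` and to `f_a⁻¹(V)`. For a set `R` of their
indices, let `W_R` be the points where the functions indexed by `R` are positive and strictly
larger than all the others. Sets `W_R` with `|R|` fixed are open and pairwise disjoint, and every
point lies in the `W_R` where `R` is its set of positive indices, which meets both families.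
Grouping by `|R| ∈ [2, m + n + 2]` yields `m + n + 1` open sets, each a disjoint union of open
pieces lying in some `Uᵢ ∩ f_a⁻¹(Vⱼ)`; fibrewise homotopies glue over such disjoint unions.
-/

open Function Topology

section FibHomotopic

variable {B A A' Y Z : Type*} [TopologicalSpace B] [TopologicalSpace A] [TopologicalSpace A']
  [TopologicalSpace Y] [TopologicalSpace Z] {pA : A → B} {pA' : A' → B} {pY : Y → B} {pZ : Z → B}
  {F G K : C(A, Y)}

theorem FibHomotopic.symm (h : FibHomotopic pA pY F G) : FibHomotopic pA pY G F := by
  obtain ⟨H, hH⟩ := h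
  exact ⟨H.symm, fun x t => hH x _⟩

theorem FibHomotopic.trans (h₁ : FibHomotopic pA pY F G) (h₂ : FibHomotopic pA pY G K) :
    FibHomotopic pA pY F K := by
  obtain ⟨H₁, hH₁⟩ := h₁
  obtain ⟨H₂, hH₂⟩ := h₂
  refine ⟨H₁.trans H₂, fun x t => ?_⟩
  rw [ContinuousMap.Homotopy.trans_apply]
  split_ifs
  exacts [hH₁ x _, hH₂ x _]

theorem FibHomotopic.comp_right (h : FibHomotopic pA pY F G) (e : C(A', A))
    (he : ∀ x, pA (e x) = pA' x) : FibHomotopic pA' pY (F.comp e) (G.comp e) := by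
  obtain ⟨H, hH⟩ := h
  exact ⟨H.compContinuousMap e, fun x t => (hH (e x) t).trans (he x)⟩

theorem FibHomotopic.comp_left (k : C(Y, Z)) (hk : ∀ y, pZ (k y) = pY y)
    (h : FibHomotopic pA pY F G) : FibHomotopic pA pZ (k.comp F) (k.comp G) := by
  obtain ⟨H, hH⟩ := h
  exact ⟨(ContinuousMap.Homotopy.refl k).comp H, fun x t => (hk _).trans (hH x t)⟩

theorem FibHomotopic.of_disjoint_open_cover {ι : Type*} {S : ι → Set A}
    (hSo : ∀ i, IsOpen (S i)) (hSd : Pairwise (Disjoint on S)) (hS : ∀ x, ∃ i, x ∈ S i)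
    (h : ∀ i, FibHomotopic (fun x : S i => pA x) pY (F.restrict (S i)) (G.restrict (S i))) :
    FibHomotopic pA pY F G := by
  choose H hH using h
  let T : ι → Set (unitInterval × A) := fun i => Prod.snd ⁻¹' S i
  let φ : ∀ i, C(T i, Y) := fun i =>
    (H i).toContinuousMap.comp ⟨fun q => (q.1.1, ⟨q.1.2, q.2⟩), by fun_prop⟩
  have hφ : ∀ i j p (hi : p ∈ T i) (hj : p ∈ T j), φ i ⟨p, hi⟩ = φ j ⟨p, hj⟩ := by
    intro i j p hi hj
    obtain rfl : i = j := hSd.eq (not_disjoint_iff.2 ⟨p.2, hi, hj⟩)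
    rfl
  have hT : ∀ p, ∃ i, T i ∈ 𝓝 p := fun p =>
    (hS p.2).imp fun i hi => ((hSo i).preimage continuous_snd).mem_nhds hi
  let L := ContinuousMap.liftCover T φ hφ hT
  have hL : ∀ i p (hp : p.2 ∈ S i), L p = H i (p.1, ⟨p.2, hp⟩) := fun i p hp =>
    ContinuousMap.liftCover_coe (i := i) ⟨p, hp⟩
  refine ⟨⟨L, fun x => ?_, fun x => ?_⟩, fun x t => ?_⟩ <;> obtain ⟨i, hi⟩ := hS x
  · exact (hL i (0, x) hi).trans ((H i).apply_zero _)
  · exact (hL i (1, x) hi).trans ((H i).apply_one _)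
  · exact (congrArg pY (hL i (t, x) hi)).trans (hH i _ t)

end FibHomotopic

section FibHomotopicOn

variable {B X Y Z : Type*} [TopologicalSpace B] [TopologicalSpace X] [TopologicalSpace Y]
  [TopologicalSpace Z] {pX : X → B} {pY : Y → B} {pZ : Z → B} {s t : Set X} {F G K : C(X, Y)}

def FibHomotopicOn (pX : X → B) (pY : Y → B) (s : Set X) (F G : C(X, Y)) : Prop :=
  FibHomotopic (fun x : s => pX x) pY (F.restrict s) (G.restrict s)

theorem FibHomotopicOn.symm (h : FibHomotopicOn pX pY s F G) : FibHomotopicOn pX pY s G F :=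
  FibHomotopic.symm h

theorem FibHomotopicOn.trans (h₁ : FibHomotopicOn pX pY s F G) (h₂ : FibHomotopicOn pX pY s G K) :
    FibHomotopicOn pX pY s F K :=
  FibHomotopic.trans h₁ h₂

theorem FibHomotopicOn.comp_right {g₁ g₂ : C(Y, Z)} {V : Set Y} (h : FibHomotopicOn pY pZ V g₁ g₂)
    (f : C(X, Y)) (hf : ∀ x, pY (f x) = pX x) (hs : MapsTo f s V) :
    FibHomotopicOn pX pZ s (g₁.comp f) (g₂.comp f) :=
  FibHomotopic.comp_right h ⟨fun x : s => ⟨f x, hs x.2⟩, by fun_prop⟩ fun x => hf x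

theorem FibHomotopicOn.mono (h : FibHomotopicOn pX pY t F G) (hst : s ⊆ t) :
    FibHomotopicOn pX pY s F G :=
  FibHomotopic.comp_right h ⟨inclusion hst, continuous_inclusion hst⟩ fun _ => rfl

theorem FibHomotopicOn.comp_left (k : C(Y, Z)) (hk : ∀ y, pZ (k y) = pY y)
    (h : FibHomotopicOn pX pY s F G) : FibHomotopicOn pX pZ s (k.comp F) (k.comp G) :=
  FibHomotopic.comp_left k hk h

theorem FibHomotopicOn.sUnion {P : Set (Set X)} (hPo : ∀ s ∈ P, IsOpen s)
    (hPd : P.PairwiseDisjoint id) (h : ∀ s ∈ P, FibHomotopicOn pX pY s F G) :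
    FibHomotopicOn pX pY (⋃₀ P) F G := by
  refine FibHomotopic.of_disjoint_open_cover (S := fun s : P => Subtype.val ⁻¹' s.1)
    (fun s => (hPo s.1 s.2).preimage continuous_subtype_val) ?_ ?_ fun s => ?_
  · intro s t hst
    exact (hPd s.2 t.2 (Subtype.coe_ne_coe.2 hst)).preimage _
  · intro x
    obtain ⟨s, hs, hx⟩ := mem_sUnion.1 x.2
    exact ⟨⟨s, hs⟩, hx⟩
  · exact FibHomotopic.comp_right (h s.1 s.2)
      ⟨fun x : Subtype.val ⁻¹' s.1 => ⟨x.1.1, x.2⟩, by fun_prop⟩ fun _ => rfl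

theorem FibHomotopicOn.comp_comp {f₀ f₁ f₂ : C(X, Y)} {g₁ g₂ : C(Y, Z)} {V : Set Y}
    (hf₀ : ∀ x, pY (f₀ x) = pX x) (hg₁ : ∀ y, pZ (g₁ y) = pY y) (hg₂ : ∀ y, pZ (g₂ y) = pY y)
    (h₁ : FibHomotopicOn pX pY s f₁ f₀) (h₂ : FibHomotopicOn pX pY s f₂ f₀)
    (hg : FibHomotopicOn pY pZ V g₁ g₂) (hs : MapsTo f₀ s V) :
    FibHomotopicOn pX pZ s (g₁.comp f₁) (g₂.comp f₂) :=
  ((h₁.comp_left g₁ hg₁).trans (hg.comp_right f₀ hf₀ hs)).trans (h₂.comp_left g₂ hg₂).symm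

end FibHomotopicOn

section fibDist

variable {B X Y ι : Type*} [TopologicalSpace B] [TopologicalSpace X] [TopologicalSpace Y]
  {pX : X → B} {pY : Y → B} {f : ι → C(X, Y)}

def IsFibHomotopyCover {κ : Type*} (pX : X → B) (pY : Y → B) (f : ι → C(X, Y))
    (U : κ → Set X) : Prop :=
  (∀ i, IsOpen (U i)) ∧ (⋃ i, U i) = univ ∧ ∀ i s t, FibHomotopicOn pX pY (U i) (f s) (f t)

theorem fibDist_le_of_isFibHomotopyCover {k : ℕ} {U : Fin (k + 1) → Set X}
    (hU : IsFibHomotopyCover pX pY f U) : fibDist pX pY f ≤ k :=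
  sInf_le ⟨k, rfl, U, hU⟩

theorem exists_isFibHomotopyCover_of_fibDist_ne_top (h : fibDist pX pY f ≠ ⊤) :
    ∃ k : ℕ, fibDist pX pY f = k ∧ ∃ U : Fin (k + 1) → Set X, IsFibHomotopyCover pX pY f U := by
  obtain ⟨n, hn, -⟩ := not_forall₂.1 (sInf_eq_top.not.1 h)
  obtain ⟨k, hk, hU⟩ := csInf_mem ⟨n, hn⟩
  exact ⟨k, hk.symm, hU⟩

theorem fibDist_eq_zero_of_isEmpty [IsEmpty ι] : fibDist pX pY f = 0 :=
  nonpos_iff_eq_zero.1 <| fibDist_le_of_isFibHomotopyCover (k := 0)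
    ⟨fun _ => isOpen_univ, iUnion_const _, fun _ s => isEmptyElim s⟩

end fibDist

section MixingCovers

variable {X κ : Type*}

def dominanceSet (θ : κ → X → ℝ) (R : Finset κ) : Set X :=
  {x | (∀ a ∈ R, 0 < θ a x) ∧ ∀ a ∈ R, ∀ b ∉ R, θ b x < θ a x}

theorem isOpen_dominanceSet [TopologicalSpace X] [Finite κ] {θ : κ → X → ℝ}
    (hθ : ∀ a, Continuous (θ a)) (R : Finset κ) : IsOpen (dominanceSet θ R) := by
  simp only [dominanceSet, ofPred_and, ofPred_forall]
  exact (isOpen_biInter_finset fun a _ => isOpen_lt continuous_const (hθ a)).inter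
    (isOpen_biInter_finset fun a _ => isOpen_iInter_of_finite fun b =>
      isOpen_iInter_of_finite fun _ => isOpen_lt (hθ b) (hθ a))

theorem disjoint_dominanceSet {θ : κ → X → ℝ} {R R' : Finset κ} (hcard : R.card = R'.card)
    (hne : R ≠ R') : Disjoint (dominanceSet θ R) (dominanceSet θ R') := by
  obtain ⟨a, haR, haR'⟩ :=
    Finset.not_subset.1 fun h => hne (Finset.eq_of_subset_of_card_le h hcard.ge)
  obtain ⟨b, hbR', hbR⟩ :=
    Finset.not_subset.1 fun h => hne (Finset.eq_of_subset_of_card_le h hcard.le).symm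
  refine disjoint_left.2 fun x hx hx' => ?_
  exact (hx.2 a haR b hbR).asymm (hx'.2 b hbR' a haR')

theorem mem_dominanceSet_filter_pos [Fintype κ] (θ : κ → X → ℝ) (x : X) :
    x ∈ dominanceSet θ (Finset.univ.filter (0 < θ · x)) := by
  simp only [dominanceSet, Finset.mem_filter, Finset.mem_univ, true_and, mem_ofPred_eq]
  exact ⟨fun a ha => ha, fun a ha b hb => (not_lt.1 hb).trans_lt ha⟩

/-- Oprea–Strom, Lemma 4.3 (mixing covers). -/
theorem exists_mixed_cover [TopologicalSpace X] [NormalSpace X] {m n : ℕ} {U : Fin (m + 1) → Set X}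
    {V : Fin (n + 1) → Set X} (hUo : ∀ i, IsOpen (U i)) (hUc : ⋃ i, U i = univ)
    (hVo : ∀ j, IsOpen (V j)) (hVc : ⋃ j, V j = univ) :
    ∃ P : Fin (m + n + 1) → Set (Set X), (∀ k, ∀ s ∈ P k, IsOpen s) ∧
      (∀ k, (P k).PairwiseDisjoint id) ∧ (∀ k, ∀ s ∈ P k, ∃ i j, s ⊆ U i ∩ V j) ∧
      ∀ x, ∃ k, x ∈ ⋃₀ P k := by
  obtain ⟨φ, hφU⟩ := PartitionOfUnity.exists_isSubordinate_of_locallyFinite isClosed_univ U hUo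
    (locallyFinite_of_finite U) hUc.ge
  obtain ⟨ψ, hψV⟩ := PartitionOfUnity.exists_isSubordinate_of_locallyFinite isClosed_univ V hVo
    (locallyFinite_of_finite V) hVc.ge
  let θ : Fin (m + 1) ⊕ Fin (n + 1) → X → ℝ := Sum.elim (fun i => φ i) (fun j => ψ j)
  refine ⟨fun k => dominanceSet θ '' {R | R.card = k + 2 ∧ (∃ i, .inl i ∈ R) ∧ ∃ j, .inr j ∈ R},
    ?_, ?_, ?_, fun x => ?_⟩
  · rintro k _ ⟨R, -, rfl⟩
    exact isOpen_dominanceSet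
      (Sum.forall.2 ⟨fun i => (φ i).continuous, fun j => (ψ j).continuous⟩) R
  · rintro k _ ⟨R, hR, rfl⟩ _ ⟨R', hR', rfl⟩ hne
    exact disjoint_dominanceSet (hR.1.trans hR'.1.symm) (ne_of_apply_ne _ hne)
  · rintro k _ ⟨R, ⟨-, ⟨i, hi⟩, ⟨j, hj⟩⟩, rfl⟩
    exact ⟨i, j, fun x hx => ⟨hφU i (subset_tsupport _ (hx.1 _ hi).ne'),
      hψV j (subset_tsupport _ (hx.1 _ hj).ne')⟩⟩
  · let R := Finset.univ.filter (0 < θ · x)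
    obtain ⟨i, hi⟩ := φ.exists_pos (mem_univ x)
    obtain ⟨j, hj⟩ := ψ.exists_pos (mem_univ x)
    have hiR : .inl i ∈ R := Finset.mem_filter.2 ⟨Finset.mem_univ _, hi⟩
    have hjR : .inr j ∈ R := Finset.mem_filter.2 ⟨Finset.mem_univ _, hj⟩
    have h2 : 1 < R.card := Finset.one_lt_card.2 ⟨_, hiR, _, hjR, Sum.inl_ne_inr⟩
    have hle : R.card ≤ m + 1 + (n + 1) := by simpa using R.card_le_univ
    exact ⟨⟨R.card - 2, by omega⟩, _, ⟨R, ⟨by simp only; omega, ⟨i, hiR⟩, ⟨j, hjR⟩⟩, rfl⟩,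
      mem_dominanceSet_filter_pos θ x⟩

end MixingCovers

theorem exists_isFibHomotopyCover_comp {B X Y Z ι : Type*} [TopologicalSpace B]
    [TopologicalSpace X] [TopologicalSpace Y] [TopologicalSpace Z] [NormalSpace X] [Nonempty ι]
    {pX : X → B} {pY : Y → B} {pZ : Z → B} {f : ι → C(X, Y)} {g : ι → C(Y, Z)}
    (hf : ∀ i x, pY (f i x) = pX x) (hg : ∀ i y, pZ (g i y) = pY y) {m n : ℕ}
    {U : Fin (m + 1) → Set X} (hU : IsFibHomotopyCover pX pY f U)
    {V : Fin (n + 1) → Set Y} (hV : IsFibHomotopyCover pY pZ g V) :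
    ∃ W : Fin (m + n + 1) → Set X, IsFibHomotopyCover pX pZ (fun i => (g i).comp (f i)) W := by
  obtain ⟨a⟩ := ‹Nonempty ι›
  obtain ⟨hUo, hUc, hUf⟩ := hU
  obtain ⟨hVo, hVc, hVg⟩ := hV
  obtain ⟨P, hPo, hPd, hPUV, hPc⟩ := exists_mixed_cover hUo hUc
    (fun j => (hVo j).preimage (f a).continuous) (by rw [← preimage_iUnion, hVc, preimage_univ])
  refine ⟨fun k => ⋃₀ P k, fun k => isOpen_sUnion (hPo k), iUnion_eq_univ_iff.2 hPc,
    fun k s t => FibHomotopicOn.sUnion (hPo k) (hPd k) fun w hw => ?_⟩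
  obtain ⟨i, j, hw⟩ := hPUV k w hw
  exact .comp_comp (hf a) (hg s) (hg t) ((hUf i s a).mono fun x hx => (hw hx).1)
    ((hUf i t a).mono fun x hx => (hw hx).1) (hVg j s t) fun x hx => (hw hx).2

theorem stmt12_general {B X Y Z : Type*} [TopologicalSpace B] [TopologicalSpace X] [TopologicalSpace Y]
    [TopologicalSpace Z] [NormalSpace X]
    (pX : X → B) (pY : Y → B) (pZ : Z → B)
    (r : ℕ) (f : Fin r → C(X, Y)) (hf : ∀ i x, pY (f i x) = pX x)
    (g : Fin r → C(Y, Z)) (hg : ∀ i y, pZ (g i y) = pY y) :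
    fibDist pX pZ (fun i => (g i).comp (f i)) ≤ fibDist pX pY f + fibDist pY pZ g := by
  rcases isEmpty_or_nonempty (Fin r) with hr | hr
  · rw [fibDist_eq_zero_of_isEmpty]
    exact zero_le
  by_cases hF : fibDist pX pY f = ⊤
  · simp [hF]
  by_cases hG : fibDist pY pZ g = ⊤
  · simp [hG]
  obtain ⟨m, hm, U, hU⟩ := exists_isFibHomotopyCover_of_fibDist_ne_top hF
  obtain ⟨n, hn, V, hV⟩ := exists_isFibHomotopyCover_of_fibDist_ne_top hG
  obtain ⟨W, hW⟩ := exists_isFibHomotopyCover_comp hf hg hU hV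
  rw [hm, hn, ← Nat.cast_add]
  exact fibDist_le_of_isFibHomotopyCover hW

/-- Triangle inequality under composition, for a normal domain:
`D_B(g_1 ∘ f_1, …, g_r ∘ f_r) ≤ D_B(f_1, …, f_r) + D_B(g_1, …, g_r)`. -/
theorem stmt12 {B X Y Z : Type*} [TopologicalSpace B] [TopologicalSpace X] [TopologicalSpace Y]
    [TopologicalSpace Z] [NormalSpace X]
    (pX : X → B) (pY : Y → B) (pZ : Z → B)
    (hpX : Continuous pX) (hpY : Continuous pY) (hpZ : Continuous pZ)
    (r : ℕ) (f : Fin r → C(X, Y)) (hf : ∀ i x, pY (f i x) = pX x)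
    (g : Fin r → C(Y, Z)) (hg : ∀ i y, pZ (g i y) = pY y) :
    fibDist pX pZ (fun i => (g i).comp (f i)) ≤ fibDist pX pY f + fibDist pY pZ g :=
  stmt12_general pX pY pZ r f hf g hg
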